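/- A function φ : [1,∞) → (0,∞) belongs to the class 𝓜 if and only if there exist a bounded Borel measurable function β : [1,∞) → ℝ having a finite limit at infinity and a continuous function γ : [1,∞) → ℝ converging to 0 at infinity such that φ(t) = exp(β(t) + ∫₁ᵗ γ(τ)/τ dτ) for all t ≥ 1. -/

import Mathlib

/-!
Put `h(x) = log φ(eˣ)`. Membership `φ ∈ 𝓜` says that `h` is measurable, locally bounded and
`h(x + u) - h(x) → 0` for every `u`; by Egorov's theorem this convergence is uniform for `u` in
compact intervals. Averaging `h` twice over unit intervals produces a `C¹` function `A` with
`A - h → 0` and `A'(x) = A₁(x + 1) - A₁(x) → 0`, where `A₁` is the single average; hence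
`h = (h - A + A(0)) + ∫₀ˣ A'`, which is the representation after the substitution `t = eˣ`.
Conversely `|∫ₓ^{x+c} g| ≤ |c| sup |g|` shows that such a representation gives `φ ∈ 𝓜`.
-/

open Filter Set

/-- The class `𝓜`. -/
def MemM (φ : ℝ → ℝ) : Prop :=
  Measurable ((Set.Ici (1:ℝ)).indicator φ) ∧
  (∀ t, 1 ≤ t → 0 < φ t) ∧
  (∀ b : ℝ, 1 < b → ∃ C : ℝ, 0 < C ∧ ∀ t ∈ Set.Icc (1:ℝ) b, φ t ≤ C ∧ 1 / φ t ≤ C) ∧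
  (∀ l : ℝ, 0 < l → Tendsto (fun t => φ (l * t) / φ t) atTop (nhds 1))

open Topology MeasureTheory intervalIntegral Real

theorem exists_volume_le_tendstoUniformlyOn_add_sub {h : ℝ → ℝ} (hmeas : Measurable h)
    (hshift : ∀ u, Tendsto (fun x => h (x + u) - h x) atTop (𝓝 0))
    {y : ℕ → ℝ} (hy : Tendsto y atTop atTop) {s : Set ℝ} (hs : MeasurableSet s)
    (hs' : volume s ≠ ⊤) {δ : ℝ} (hδ : 0 < δ) :
    ∃ t, volume t ≤ ENNReal.ofReal δ ∧
      TendstoUniformlyOn (fun n v => h (y n + v) - h (y n)) 0 atTop (s \ t) := by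
  obtain ⟨t, -, -, ht, hunif⟩ := tendstoUniformlyOn_of_ae_tendsto (μ := volume)
    (fun n => ((hmeas.comp (measurable_const_add _)).sub_const _).stronglyMeasurable)
    stronglyMeasurable_const hs hs' (ae_of_all _ fun v _ => (hshift v).comp hy) hδ
  exact ⟨t, ht, hunif⟩

theorem exists_mem_Icc_notMem_of_volume_add_lt {s t : Set ℝ} {a : ℝ}
    (hst : volume s + volume t < ENNReal.ofReal a) (c : ℝ) :
    ∃ v ∈ Icc c (c + a), v ∉ s ∧ v - c ∉ t := by
  by_contra! hcover
  have hsub : Icc c (c + a) ⊆ s ∪ (· + -c) ⁻¹' t := fun v hv => by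
    by_cases hvs : v ∈ s
    · exact Or.inl hvs
    · exact Or.inr (by simpa [← sub_eq_add_neg] using hcover v hv hvs)
  have := (measure_mono (μ := volume) hsub).trans (measure_union_le _ _)
  rw [Real.volume_Icc, add_sub_cancel_left, measure_preimage_add_right] at this
  exact this.not_gt hst

/-- The uniform convergence theorem for slowly varying functions, in additive form. -/
theorem tendstoUniformlyOn_add_sub {h : ℝ → ℝ} (hmeas : Measurable h)
    (hshift : ∀ u, Tendsto (fun x => h (x + u) - h x) atTop (𝓝 0)) (a : ℝ) :
    TendstoUniformlyOn (fun x u => h (x + u) - h x) 0 atTop (Icc 0 a) := by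
  suffices H : ∀ a, 0 < a → TendstoUniformlyOn (fun x u => h (x + u) - h x) 0 atTop (Icc 0 a) from
    (H (max a 1) (by positivity)).mono (Icc_subset_Icc_right (le_max_left _ _))
  intro a ha
  rw [Metric.tendstoUniformlyOn_iff]
  intro ε hε
  by_contra hfail
  rw [not_eventually, frequently_atTop] at hfail
  choose x hx hbad using fun n : ℕ => hfail n
  push Not at hbad
  choose u hu hbig using hbad
  have hx_top : Tendsto x atTop atTop := tendsto_atTop_mono hx tendsto_natCast_atTop_atTop
  have hxu_top : Tendsto (fun n => x n + u n) atTop atTop :=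
    tendsto_atTop_mono (fun n => le_add_of_nonneg_right (hu n).1) hx_top
  obtain ⟨t₁, ht₁, hunif₁⟩ := exists_volume_le_tendstoUniformlyOn_add_sub hmeas hshift hx_top
    measurableSet_Icc (measure_Icc_lt_top (a := 0) (b := 2 * a)).ne (by positivity : 0 < a / 3)
  obtain ⟨t₂, ht₂, hunif₂⟩ := exists_volume_le_tendstoUniformlyOn_add_sub hmeas hshift hxu_top
    measurableSet_Icc (measure_Icc_lt_top (a := 0) (b := a)).ne (by positivity : 0 < a / 3)
  rw [Metric.tendstoUniformlyOn_iff] at hunif₁ hunif₂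
  obtain ⟨n, hn₁, hn₂⟩ := ((hunif₁ _ (half_pos hε)).and (hunif₂ _ (half_pos hε))).exists
  have hsmall : volume t₁ + volume t₂ < ENNReal.ofReal a := calc
    _ ≤ ENNReal.ofReal (a / 3) + ENNReal.ofReal (a / 3) := add_le_add ht₁ ht₂
    _ = ENNReal.ofReal (2 * a / 3) := by
      rw [← ENNReal.ofReal_add (by positivity) (by positivity)]; ring_nf
    _ < ENNReal.ofReal a := (ENNReal.ofReal_lt_ofReal_iff ha).2 (by linarith)
  -- at `v` both uniform estimates apply, and `h (x n + u n) - h (x n)` is their difference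
  obtain ⟨v, hv, hv₁, hv₂⟩ := exists_mem_Icc_notMem_of_volume_add_lt hsmall (u n)
  have e₁ := hn₁ v ⟨⟨by linarith [(hu n).1, hv.1], by linarith [(hu n).2, hv.2]⟩, hv₁⟩
  have e₂ := hn₂ (v - u n) ⟨⟨by linarith [hv.1], by linarith [hv.2]⟩, hv₂⟩
  have e := hbig n
  rw [add_add_sub_cancel] at e₂
  simp only [Pi.zero_apply, dist_zero_left, Real.norm_eq_abs] at e₁ e₂ e
  have := abs_sub (h (x n + v) - h (x n)) (h (x n + v) - h (x n + u n))
  rw [sub_sub_sub_cancel_left] at this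
  linarith

theorem tendsto_integral_add_of_tendsto_zero {g : ℝ → ℝ} (hg : Tendsto g atTop (𝓝 0)) (c : ℝ) :
    Tendsto (fun x => ∫ s in x..x + c, g s) atTop (𝓝 0) := by
  rw [Metric.tendsto_nhds] at hg ⊢
  intro ε hε
  obtain ⟨X, hX⟩ := eventually_atTop.1 (hg (ε / (|c| + 1)) (by positivity))
  filter_upwards [eventually_ge_atTop (X + |c|)] with x hx
  have hbound : ‖∫ s in x..x + c, g s‖ ≤ ε / (|c| + 1) * |x + c - x| :=
    norm_integral_le_of_norm_le_const fun s hs => by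
      have hmin : x - |c| ≤ min x (x + c) :=
        le_min (by linarith [abs_nonneg c]) (by linarith [neg_abs_le c])
      simpa using (hX s (by linarith [hs.1])).le
  rw [dist_zero_right]
  calc _ ≤ _ := hbound
    _ < ε := by
      rw [add_sub_cancel_left, div_mul_eq_mul_div, div_lt_iff₀ (by positivity)]
      nlinarith [abs_nonneg c]

theorem Measurable.intervalIntegrable_of_forall_abs_le {h : ℝ → ℝ} (hmeas : Measurable h)
    (hbdd : ∀ b, ∃ M, ∀ x ≤ b, |h x| ≤ M) (a b : ℝ) : IntervalIntegrable h volume a b := by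
  obtain ⟨M, hM⟩ := hbdd (a ⊔ b)
  exact (intervalIntegrable_const (c := M)).mono_fun' hmeas.aestronglyMeasurable
    (ae_restrict_of_forall_mem measurableSet_uIoc fun x hx => hM x hx.2)

theorem exists_abs_le_of_tendsto {f : ℝ → ℝ} {L a : ℝ} (hf : Tendsto f atTop (𝓝 L))
    (hbdd : ∀ b, ∃ M, ∀ x ∈ Icc a b, |f x| ≤ M) : ∃ C, ∀ x, a ≤ x → |f x| ≤ C := by
  obtain ⟨X, hX⟩ := eventually_atTop.1 (hf.eventually (Metric.closedBall_mem_nhds L one_pos))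
  obtain ⟨M, hM⟩ := hbdd X
  refine ⟨max M (|L| + 1), fun x hx => ?_⟩
  rcases le_total x X with hxX | hXx
  · exact (hM x ⟨hx, hxX⟩).trans (le_max_left _ _)
  · have hnear := hX x hXx
    rw [Real.dist_eq] at hnear
    exact le_max_of_le_right (by linarith [abs_sub_abs_le_abs_sub (f x) L])

noncomputable def unitAverage (f : ℝ → ℝ) (x : ℝ) : ℝ := ∫ u in x..x + 1, f u

section unitAverage

variable {f : ℝ → ℝ}

theorem unitAverage_eq_sub (hf : ∀ a b, IntervalIntegrable f volume a b) (x : ℝ) :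
    unitAverage f x = (∫ u in 0..x + 1, f u) - ∫ u in 0..x, f u :=
  (integral_interval_sub_left (hf _ _) (hf _ _)).symm

theorem continuous_unitAverage (hf : ∀ a b, IntervalIntegrable f volume a b) :
    Continuous (unitAverage f) := by
  have hP := continuous_primitive hf 0
  rw [funext (unitAverage_eq_sub hf)]
  exact (hP.comp (continuous_add_const 1)).sub hP

theorem hasDerivAt_unitAverage (hf : Continuous f) (x : ℝ) :
    HasDerivAt (unitAverage f) (f (x + 1) - f x) x := by
  have hP := fun b => (hf.integral_hasStrictDerivAt 0 b).hasDerivAt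
  rw [funext (unitAverage_eq_sub hf.intervalIntegrable)]
  exact ((hP (x + 1)).comp_add_const x 1).sub (hP x)

theorem integral_add_one_sub_eq_unitAverage_sub (hf : Continuous f) (x : ℝ) :
    ∫ s in 0..x, (f (s + 1) - f s) = unitAverage f x - unitAverage f 0 :=
  integral_eq_sub_of_hasDerivAt (fun s _ => hasDerivAt_unitAverage hf s)
    (((hf.comp (continuous_add_const 1)).sub hf).intervalIntegrable _ _)

theorem unitAverage_add_one_sub (hf : ∀ a b, IntervalIntegrable f volume a b) (x : ℝ) :
    unitAverage f (x + 1) - unitAverage f x = unitAverage (fun u => f (u + 1) - f u) x := by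
  rw [unitAverage, unitAverage, unitAverage, integral_sub _ (hf _ _),
    ← integral_comp_add_right (a := x) (b := x + 1) f 1]
  simpa using (hf (x + 1) (x + 1 + 1)).comp_add_right 1

theorem abs_unitAverage_sub_le {x c ε : ℝ} (hf : IntervalIntegrable f volume x (x + 1))
    (hε : ∀ u ∈ Ioc x (x + 1), |f u - c| ≤ ε) : |unitAverage f x - c| ≤ ε := by
  have heq : unitAverage f x - c = ∫ u in x..x + 1, (f u - c) := by
    simp [unitAverage, integral_sub hf intervalIntegrable_const]
  have hbound := norm_integral_le_of_norm_le_const (a := x) (b := x + 1) (C := ε)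
    (f := fun u => f u - c) fun u hu => hε u (by rwa [uIoc_of_le (by linarith)] at hu)
  rwa [← heq, Real.norm_eq_abs, add_sub_cancel_left, abs_one, mul_one] at hbound

end unitAverage

theorem tendsto_unitAverage_unitAverage_sub {h : ℝ → ℝ}
    (hint : ∀ a b, IntervalIntegrable h volume a b)
    (hunif : TendstoUniformlyOn (fun x u => h (x + u) - h x) 0 atTop (Icc 0 2)) :
    Tendsto (fun x => unitAverage (unitAverage h) x - h x) atTop (𝓝 0) := by
  rw [Metric.tendstoUniformlyOn_iff] at hunif
  rw [Metric.tendsto_nhds]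
  intro ε hε
  filter_upwards [hunif (ε / 2) (half_pos hε)] with x hx
  have hnear : ∀ u ∈ Ioc x (x + 2), |h u - h x| ≤ ε / 2 := fun u hu => by
    have := (hx (u - x) ⟨by linarith [hu.1], by linarith [hu.2]⟩).le
    rwa [Pi.zero_apply, dist_zero_left, Real.norm_eq_abs, add_sub_cancel] at this
  have hA₁ : ∀ s ∈ Ioc x (x + 1), |unitAverage h s - h x| ≤ ε / 2 := fun s hs =>
    abs_unitAverage_sub_le (hint _ _) fun u hu =>
      hnear u ⟨hs.1.trans hu.1, by linarith [hs.2, hu.2]⟩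
  have hA₂ := abs_unitAverage_sub_le
    ((continuous_unitAverage hint).intervalIntegrable x (x + 1)) hA₁
  rw [Real.dist_eq, sub_zero]
  linarith

theorem exists_eq_add_integral_of_tendstoUniformlyOn {h : ℝ → ℝ} (hmeas : Measurable h)
    (hbdd : ∀ b, ∃ M, ∀ x ≤ b, |h x| ≤ M)
    (hunif : TendstoUniformlyOn (fun x u => h (x + u) - h x) 0 atTop (Icc 0 2)) :
    ∃ β γ : ℝ → ℝ, Measurable β ∧ (∃ C, ∀ x, 0 ≤ x → |β x| ≤ C) ∧
      (∃ L, Tendsto β atTop (𝓝 L)) ∧ Continuous γ ∧ Tendsto γ atTop (𝓝 0) ∧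
      ∀ x, h x = β x + ∫ s in 0..x, γ s := by
  have hint := hmeas.intervalIntegrable_of_forall_abs_le hbdd
  set A₁ := unitAverage h
  set A₂ := unitAverage A₁
  have hA₁ : Continuous A₁ := continuous_unitAverage hint
  have hA₂ : Continuous A₂ := continuous_unitAverage hA₁.intervalIntegrable
  have hβ : Tendsto (fun x => h x - A₂ x + A₂ 0) atTop (𝓝 (A₂ 0)) := by
    simpa using (tendsto_unitAverage_unitAverage_sub hint hunif).neg.add_const (A₂ 0)
  refine ⟨fun x => h x - A₂ x + A₂ 0, fun s => A₁ (s + 1) - A₁ s,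
    (hmeas.sub hA₂.measurable).add_const _, exists_abs_le_of_tendsto hβ fun b => ?_, ⟨_, hβ⟩,
    (hA₁.comp (continuous_add_const 1)).sub hA₁, ?_,
    fun x => by rw [integral_add_one_sub_eq_unitAverage_sub hA₁]; ring⟩
  · obtain ⟨M, hM⟩ := hbdd b
    obtain ⟨M', hM'⟩ := isCompact_Icc.exists_bound_of_continuousOn (hA₂.continuousOn (s := Icc 0 b))
    refine ⟨M + M' + |A₂ 0|, fun x hx => ?_⟩
    have hA₂x : |A₂ x| ≤ M' := by simpa using hM' x hx
    calc |h x - A₂ x + A₂ 0| ≤ |h x| + |A₂ x| + |A₂ 0| :=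
          (abs_add_le _ _).trans (add_le_add_left (abs_sub _ _) _)
      _ ≤ M + M' + |A₂ 0| := by gcongr; exact hM x hx.2
  · have hshift : Tendsto (fun u => h (u + 1) - h u) atTop (𝓝 0) :=
      hunif.tendsto_at (show (1 : ℝ) ∈ Icc 0 2 by norm_num)
    exact (tendsto_integral_add_of_tendsto_zero hshift 1).congr fun x =>
      (unitAverage_add_one_sub hint x).symm

theorem integral_comp_log_div {g : ℝ → ℝ} (hg : Continuous g) {t : ℝ} (ht : 0 < t) :
    ∫ τ in (1:ℝ)..t, g (log τ) / τ = ∫ s in 0..log t, g s := by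
  have hpos : ∀ τ ∈ uIcc 1 t, 0 < τ := fun τ hτ => (lt_min one_pos ht).trans_le hτ.1
  have hsubst := integral_comp_mul_deriv (fun τ hτ => hasDerivAt_log (hpos τ hτ).ne')
    (continuousOn_inv₀.mono fun τ hτ => (hpos τ hτ).ne') hg
  rw [log_one] at hsubst
  simpa [div_eq_mul_inv] using hsubst

-- Through the indicator, `log` sees `0` when `eˣ < 1`, and `log 0 = 0`.
noncomputable def logExp (φ : ℝ → ℝ) (x : ℝ) : ℝ := log ((Ici 1).indicator φ (exp x))

theorem logExp_of_nonneg (φ : ℝ → ℝ) {x : ℝ} (hx : 0 ≤ x) : logExp φ x = log (φ (exp x)) := by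
  rw [logExp, indicator_of_mem (mem_Ici.2 (one_le_exp hx))]

theorem logExp_of_neg (φ : ℝ → ℝ) {x : ℝ} (hx : x < 0) : logExp φ x = 0 := by
  rw [logExp, indicator_of_notMem (by simpa using exp_lt_one_iff.2 hx), log_zero]

theorem logExp_log (φ : ℝ → ℝ) {t : ℝ} (ht : 1 ≤ t) : logExp φ (log t) = log (φ t) := by
  rw [logExp_of_nonneg φ (log_nonneg ht), exp_log (by linarith)]

namespace MemM

variable {φ : ℝ → ℝ}

theorem measurable_logExp (hφ : MemM φ) : Measurable (logExp φ) :=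
  measurable_log.comp (hφ.1.comp measurable_exp)

theorem exists_abs_logExp_le (hφ : MemM φ) (b : ℝ) : ∃ M, ∀ x ≤ b, |logExp φ x| ≤ M := by
  obtain ⟨C, -, hC⟩ := hφ.2.2.1 (exp b + 1) (by linarith [exp_pos b])
  refine ⟨|log C|, fun x hx => ?_⟩
  rcases lt_or_ge x 0 with hx₀ | hx₀
  · simp [logExp_of_neg φ hx₀]
  · have ht : exp x ∈ Icc 1 (exp b + 1) := ⟨one_le_exp hx₀, by linarith [exp_le_exp.2 hx]⟩
    obtain ⟨hle, hinv⟩ := hC _ ht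
    have hpos := hφ.2.1 _ ht.1
    have hlog_inv := log_le_log (by positivity) hinv
    rw [one_div, log_inv] at hlog_inv
    rw [logExp_of_nonneg φ hx₀, abs_le]
    constructor <;> linarith [log_le_log hpos hle, le_abs_self (log C)]

theorem tendsto_logExp_add_sub (hφ : MemM φ) (u : ℝ) :
    Tendsto (fun x => logExp φ (x + u) - logExp φ x) atTop (𝓝 0) := by
  have hratio := ((continuousAt_log one_ne_zero).tendsto.comp
    (hφ.2.2.2 _ (exp_pos u))).comp tendsto_exp_atTop
  rw [log_one] at hratio
  refine hratio.congr' ?_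
  filter_upwards [eventually_ge_atTop 0, eventually_ge_atTop (-u)] with x hx hxu
  simp only [Function.comp_apply, ← exp_add, add_comm u x]
  rw [log_div (hφ.2.1 _ (one_le_exp (by linarith))).ne' (hφ.2.1 _ (one_le_exp hx)).ne',
    logExp_of_nonneg φ (by linarith), logExp_of_nonneg φ hx]

theorem congr {ψ : ℝ → ℝ} (hφ : MemM φ) (h : ∀ t, 1 ≤ t → φ t = ψ t) : MemM ψ := by
  obtain ⟨hmeas, hpos, hbdd, hratio⟩ := hφ
  refine ⟨by rwa [← indicator_congr (s := Ici 1) fun t ht => h t ht],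
    fun t ht => h t ht ▸ hpos t ht, fun b hb => ?_, fun l hl => ?_⟩
  · obtain ⟨C, hC, hCb⟩ := hbdd b hb
    exact ⟨C, hC, fun t ht => h t ht.1 ▸ hCb t ht⟩
  · refine (hratio l hl).congr' ?_
    filter_upwards [eventually_ge_atTop 1,
      (tendsto_id.const_mul_atTop hl).eventually_ge_atTop 1] with t ht hlt
    rw [h t ht, h (l * t) hlt]

end MemM

theorem memM_exp_add_comp_log {β G : ℝ → ℝ} (hβ : Measurable ((Ici (1:ℝ)).indicator β))
    (hβ_bdd : ∃ C, ∀ t, 1 ≤ t → |β t| ≤ C) {L : ℝ} (hβ_lim : Tendsto β atTop (𝓝 L))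
    (hG : Continuous G) (hG_shift : ∀ c, Tendsto (fun x => G (x + c) - G x) atTop (𝓝 0)) :
    MemM fun t => exp (β t + G (log t)) := by
  obtain ⟨C, hC⟩ := hβ_bdd
  refine ⟨?_, fun t _ => exp_pos _, fun b _ => ?_, fun l hl => ?_⟩
  · rw [indicator_congr (s := Ici 1) (g := fun t => exp ((Ici 1).indicator β t + G (log t)))
      fun t ht => by simp only [indicator_of_mem ht]]
    exact (measurable_exp.comp (hβ.add (hG.measurable.comp measurable_log))).indicator
      measurableSet_Ici
  · obtain ⟨M, hM⟩ := isCompact_Icc.exists_bound_of_continuousOn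
      (hG.continuousOn (s := Icc 0 (log b)))
    refine ⟨exp (C + M), exp_pos _, fun t ht => ?_⟩
    have hGt : |G (log t)| ≤ M := by
      simpa using hM (log t) ⟨log_nonneg ht.1, log_le_log (by linarith [ht.1]) ht.2⟩
    have hsum : |β t + G (log t)| ≤ C + M := (abs_add_le _ _).trans (add_le_add (hC t ht.1) hGt)
    rw [one_div, ← exp_neg]
    exact ⟨exp_le_exp.2 ((le_abs_self _).trans hsum), exp_le_exp.2 ((neg_le_abs _).trans hsum)⟩
  · have hβ_diff : Tendsto (fun t => β (l * t) - β t) atTop (𝓝 0) := by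
      simpa using (hβ_lim.comp (tendsto_id.const_mul_atTop hl)).sub hβ_lim
    have hG_diff : Tendsto (fun t => G (log (l * t)) - G (log t)) atTop (𝓝 0) := by
      refine ((hG_shift (log l)).comp tendsto_log_atTop).congr' ?_
      filter_upwards [eventually_gt_atTop 0] with t ht
      simp [log_mul hl.ne' ht.ne', add_comm]
    have hsum := hβ_diff.add hG_diff
    rw [add_zero] at hsum
    have hexp := (continuous_exp.tendsto 0).comp hsum
    rw [exp_zero] at hexp
    refine hexp.congr fun t => ?_
    simp only [Function.comp_apply, ← exp_sub]
    ring_nf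

theorem memM_exp_add_integral_div {β γ : ℝ → ℝ} (hβ : Measurable ((Ici (1:ℝ)).indicator β))
    (hβ_bdd : ∃ C, ∀ t, 1 ≤ t → |β t| ≤ C) {L : ℝ} (hβ_lim : Tendsto β atTop (𝓝 L))
    (hγ : ContinuousOn γ (Ici 1)) (hγ_lim : Tendsto γ atTop (𝓝 0)) :
    MemM fun t => exp (β t + ∫ τ in (1:ℝ)..t, γ τ / τ) := by
  set g : ℝ → ℝ := fun s => γ (exp (max 0 s))
  have hg : Continuous g := hγ.comp_continuous (by fun_prop) fun s => one_le_exp (le_max_left _ _)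
  have hg_lim : Tendsto g atTop (𝓝 0) :=
    hγ_lim.comp (tendsto_exp_atTop.comp (tendsto_atTop_mono (le_max_right 0) tendsto_id))
  refine (memM_exp_add_comp_log hβ hβ_bdd hβ_lim (continuous_primitive hg.intervalIntegrable 0)
    fun c => (tendsto_integral_add_of_tendsto_zero hg_lim c).congr fun x =>
      (integral_interval_sub_left (hg.intervalIntegrable _ _) (hg.intervalIntegrable _ _)).symm)
    |>.congr fun t ht => ?_
  rw [← integral_comp_log_div hg (by linarith)]
  congr 2
  refine integral_congr fun τ hτ => ?_
  rw [uIcc_of_le ht] at hτ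
  simp [g, max_eq_right (log_nonneg hτ.1), exp_log (by linarith [hτ.1] : (0:ℝ) < τ)]

/-- Karamata-type representation theorem for the class `𝓜`: `φ ∈ 𝓜` if and only if
`φ(t) = exp(β(t) + ∫₁ᵗ γ(τ)/τ dτ)` on `[1,∞)` for a bounded Borel measurable function `β`
having a finite limit at infinity and a continuous function `γ` converging to `0` at
infinity. -/
theorem memM_iff_karamata_representation (φ : ℝ → ℝ) :
    MemM φ ↔
      ∃ β γ : ℝ → ℝ,
        Measurable ((Set.Ici (1:ℝ)).indicator β) ∧
        (∃ Cβ : ℝ, ∀ t, 1 ≤ t → |β t| ≤ Cβ) ∧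
        (∃ L : ℝ, Tendsto β atTop (nhds L)) ∧
        ContinuousOn γ (Set.Ici (1:ℝ)) ∧
        Tendsto γ atTop (nhds 0) ∧
        ∀ t, 1 ≤ t → φ t = Real.exp (β t + ∫ τ in (1:ℝ)..t, γ τ / τ) := by
  constructor
  · intro hφ
    obtain ⟨β, γ, hβ, ⟨C, hC⟩, ⟨L, hL⟩, hγ, hγ_lim, hrep⟩ :=
      exists_eq_add_integral_of_tendstoUniformlyOn hφ.measurable_logExp hφ.exists_abs_logExp_le
        (tendstoUniformlyOn_add_sub hφ.measurable_logExp hφ.tendsto_logExp_add_sub 2)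
    refine ⟨fun t => β (log t), fun t => γ (log t),
      (hβ.comp measurable_log).indicator measurableSet_Ici,
      ⟨C, fun t ht => hC _ (log_nonneg ht)⟩, ⟨L, hL.comp tendsto_log_atTop⟩,
      hγ.comp_continuousOn (continuousOn_log.mono fun t (ht : 1 ≤ t) => by
        simp only [mem_compl_iff, mem_singleton_iff]; linarith),
      hγ_lim.comp tendsto_log_atTop, fun t ht => ?_⟩
    rw [integral_comp_log_div hγ (by linarith), ← hrep, logExp_log φ ht,
      exp_log (hφ.2.1 t ht)]
  · rintro ⟨β, γ, hβ, hβ_bdd, ⟨L, hL⟩, hγ, hγ_lim, hrep⟩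
    exact (memM_exp_add_integral_div hβ hβ_bdd hL hγ hγ_lim).congr fun t ht => (hrep t ht).symm
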